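/- arXiv:2104.06293 — 3 statements merged into one kernel-verified Lean document; each statement's English description precedes it below -/
import Mathlib

section
/- With the mixture-of-power utility $U$, the shifted argument $\hat\chi(x)$, $A = 1 + \frac{L\gamma}{\alpha} > 0$, and $f(x) = x^{1-\alpha} + x^{1-\beta}$: $\hat\chi(x) > 0$ for all sufficiently large $x$, and $\lim_{x\to\infty} \frac{\hat\chi(x)^{1-\alpha} + \hat\chi(x)^{1-\beta}}{x^{1-\alpha} + x^{1-\beta}} = A^{1-\alpha}$. -/
/-!
Near infinity the term `x ^ (-α)` dominates `U'` and `x ^ (-α - 1)` dominates `U''`, so the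
relative risk tolerance `-U'(x) / (x U''(x))` tends to `1 / α` and hence `χ̂(x) / x → A > 0`.
Then `χ̂` is eventually positive, and since `x ^ (1 - α)` dominates `f(x)`, homogeneity of the
leading term gives `f(χ̂(x)) / f(x) → A ^ (1 - α)`.
-/

open Filter Topology Real

theorem tendsto_rpow_add_rpow_div_of_tendsto_div {p q A : ℝ} (hqp : q < p) (hA : 0 < A)
    {χ : ℝ → ℝ} (hχ : Tendsto (fun x => χ x / x) atTop (𝓝 A)) :
    Tendsto (fun x => (χ x ^ p + χ x ^ q) / (x ^ p + x ^ q)) atTop (𝓝 (A ^ p)) := by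
  have hu : Tendsto (fun x : ℝ => x ^ (q - p)) atTop (𝓝 0) := by
    simpa only [neg_sub] using tendsto_rpow_neg_atTop (sub_pos.2 hqp)
  have hlim : Tendsto (fun x => ((χ x / x) ^ p + x ^ (q - p) * (χ x / x) ^ q) / (1 + x ^ (q - p)))
      atTop (𝓝 (A ^ p)) := by
    have hp := hχ.rpow_const (p := p) (Or.inl hA.ne')
    have hq := hχ.rpow_const (p := q) (Or.inl hA.ne')
    convert (hp.add (hu.mul hq)).div (hu.const_add 1) (by norm_num) using 2 <;> simp
  refine hlim.congr' ?_
  filter_upwards [eventually_gt_atTop 0, hχ.eventually (eventually_gt_nhds hA)] with x hx hχx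
  obtain ⟨r, hr, hχr⟩ : ∃ r > 0, χ x = x * r := ⟨χ x / x, hχx, by field_simp⟩
  have hxq : x ^ q = x ^ p * x ^ (q - p) := by rw [← rpow_add hx]; ring_nf
  have hxp : 0 < x ^ p := rpow_pos_of_pos hx p
  have hxqp : 0 < x ^ (q - p) := rpow_pos_of_pos hx _
  rw [hχr, mul_div_cancel_left₀ _ hx.ne', mul_rpow hx.le hr.le, mul_rpow hx.le hr.le, hxq,
    div_eq_div_iff (by positivity) (by positivity)]
  ring

theorem tendsto_rpow_mixture_div_mul_rpow_mixture {c₁ c₂ α β : ℝ} (hc₁ : c₁ ≠ 0) (hα : α ≠ 0)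
    (hαβ : α < β) :
    Tendsto (fun x : ℝ => (c₁ * x ^ (-α) + c₂ * x ^ (-β)) /
      (x * (c₁ * α * x ^ (-α - 1) + c₂ * β * x ^ (-β - 1)))) atTop (𝓝 α⁻¹) := by
  have hu : Tendsto (fun x : ℝ => x ^ (α - β)) atTop (𝓝 0) := by
    simpa only [neg_sub] using tendsto_rpow_neg_atTop (sub_pos.2 hαβ)
  have hlim : Tendsto (fun x : ℝ => (c₁ + c₂ * x ^ (α - β)) / (c₁ * α + c₂ * β * x ^ (α - β)))
      atTop (𝓝 α⁻¹) := by
    have := ((hu.const_mul c₂).const_add c₁).div ((hu.const_mul (c₂ * β)).const_add (c₁ * α))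
      (by simp [hc₁, hα])
    convert this using 2
    · rfl
    · field_simp
      ring
  refine hlim.congr' ?_
  filter_upwards [eventually_gt_atTop 0] with x hx
  have hmul : ∀ s : ℝ, x * x ^ (s - 1) = x ^ s := fun s => by
    simpa using (rpow_add hx 1 (s - 1)).symm
  have hxβ : x ^ (-β) = x ^ (-α) * x ^ (α - β) := by rw [← rpow_add hx]; ring_nf
  have hnum : c₁ * x ^ (-α) + c₂ * x ^ (-β) = x ^ (-α) * (c₁ + c₂ * x ^ (α - β)) := by
    rw [hxβ]; ring
  have hden : x * (c₁ * α * x ^ (-α - 1) + c₂ * β * x ^ (-β - 1)) =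
      x ^ (-α) * (c₁ * α + c₂ * β * x ^ (α - β)) := by
    linear_combination (c₁ * α) * hmul (-α) + (c₂ * β) * hmul (-β) + (c₂ * β) * hxβ
  rw [hnum, hden, mul_div_mul_left _ _ (rpow_pos_of_pos hx _).ne']

theorem f_shifted_over_f_tendsto_general
    (c₁ c₂ α β L γ : ℝ) (hc₁ : 0 < c₁)
    (hα : 0 < α) (hαβ : α < β)
    (A : ℝ) (hA : A = 1 + L * γ / α) (hApos : 0 < A)
    (chiHat : ℝ → ℝ)
    (hchi : ∀ x : ℝ, chiHat x = x + L * γ *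
      ((c₁ * x ^ (-α) + c₂ * x ^ (-β)) /
        (c₁ * α * x ^ (-α - 1) + c₂ * β * x ^ (-β - 1)))) :
    (∀ᶠ x in atTop, 0 < chiHat x) ∧
    Tendsto (fun x : ℝ =>
        (chiHat x ^ (1 - α) + chiHat x ^ (1 - β)) / (x ^ (1 - α) + x ^ (1 - β)))
      atTop (nhds (A ^ (1 - α))) := by
  have hratio : Tendsto (fun x => chiHat x / x) atTop (𝓝 A) := by
    have := ((tendsto_rpow_mixture_div_mul_rpow_mixture (c₂ := c₂) hc₁.ne' hα.ne'
      hαβ).const_mul (L * γ)).const_add 1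
    rw [hA, div_eq_mul_inv]
    refine this.congr' ?_
    filter_upwards [eventually_ne_atTop 0] with x hx
    rw [hchi, add_div x, div_self hx, mul_div_assoc (L * γ), div_div, mul_comm x]
  refine ⟨?_, tendsto_rpow_add_rpow_div_of_tendsto_div (by linarith) hApos hratio⟩
  filter_upwards [eventually_gt_atTop 0, hratio.eventually (eventually_gt_nhds hApos)]
    with x hx hpos
  exact (div_pos_iff_of_pos_right hx).1 hpos

/-- With `A = 1 + Lγ/α > 0`, the shifted argument `χ̂(x)` is
eventually positive and `f(χ̂(x))/f(x) → A^(1-α)`. -/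
theorem f_shifted_over_f_tendsto
    (c₁ c₂ α β L γ : ℝ) (hc₁ : 0 < c₁) (hc₂ : 0 ≤ c₂)
    (hα : 0 < α) (hαβ : α < β) (hα1 : α ≠ 1) (hβ1 : β ≠ 1) (hγ : 0 < γ)
    (A : ℝ) (hA : A = 1 + L * γ / α) (hApos : 0 < A)
    (chiHat : ℝ → ℝ)
    (hchi : ∀ x : ℝ, chiHat x = x + L * γ *
      ((c₁ * x ^ (-α) + c₂ * x ^ (-β)) /
        (c₁ * α * x ^ (-α - 1) + c₂ * β * x ^ (-β - 1)))) :
    (∀ᶠ x in atTop, 0 < chiHat x) ∧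
    Tendsto (fun x : ℝ =>
        (chiHat x ^ (1 - α) + chiHat x ^ (1 - β)) / (x ^ (1 - α) + x ^ (1 - β)))
      atTop (nhds (A ^ (1 - α))) :=
  f_shifted_over_f_tendsto_general c₁ c₂ α β L γ hc₁ hα hαβ A hA hApos chiHat hchi
end

section
/- With the mixture-of-power utility $U$, the shifted argument $\hat\chi(x)$, $A = 1 + \frac{L\gamma}{\alpha} > 0$, and $f(x) = x^{1-\alpha} + x^{1-\beta}$, one has $\lim_{x\to\infty} \frac{U(\hat\chi(x)) - U(x)}{x^{1-\alpha} + x^{1-\beta}} = \frac{c_1}{1-\alpha}\big(A^{1-\alpha} - 1\big)$; in particular $U(\hat\chi(x)) - U(x)$ is of order $f(x)$ as $x \to \infty$. -/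
/-!
Put `t = x ^ (α - β)`, which tends to `0` as `x → ∞` because `α < β`. For `x > 0` the shifted
argument factors as `χ̂(x) = x · g(t)` with `g(t) = 1 + Lγ (c₁ + c₂ t) / (α c₁ + β c₂ t)`, a function
continuous at `0` with `g(0) = A`. Pulling `x ^ (1 - α)` out of numerator and denominator, the ratio
becomes `(c₁/(1-α) (g(t)^(1-α) - 1) + c₂/(1-β) t (g(t)^(1-β) - 1)) / (1 + t)`, whose limit is read off
at `t = 0`.
-/

open Filter Real Topology

noncomputable def shiftFactor (c₁ c₂ α β κ t : ℝ) : ℝ :=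
  1 + κ * ((c₁ + c₂ * t) / (α * c₁ + β * c₂ * t))

lemma continuousAt_shiftFactor_zero {c₁ α : ℝ} (hc₁ : c₁ ≠ 0) (hα : α ≠ 0) (c₂ β κ : ℝ) :
    ContinuousAt (shiftFactor c₁ c₂ α β κ) 0 := by
  unfold shiftFactor
  have : α * c₁ + β * c₂ * 0 ≠ 0 := by simpa using mul_ne_zero hα hc₁
  fun_prop (disch := exact this)

lemma shiftFactor_zero {c₁ α : ℝ} (hc₁ : c₁ ≠ 0) (c₂ β κ : ℝ) :
    shiftFactor c₁ c₂ α β κ 0 = 1 + κ / α := by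
  simp only [shiftFactor, mul_zero, add_zero, div_mul_cancel_right₀ hc₁, div_eq_mul_inv]

lemma add_drift_eq_mul_shiftFactor {x c₁ c₂ α β : ℝ} (hx : 0 < x) (hc₁ : 0 < c₁) (hc₂ : 0 ≤ c₂)
    (hα : 0 < α) (hβ : 0 < β) (κ : ℝ) :
    x + κ * ((c₁ * x ^ (-α) + c₂ * x ^ (-β)) / (c₁ * α * x ^ (-α - 1) + c₂ * β * x ^ (-β - 1))) =
      x * shiftFactor c₁ c₂ α β κ (x ^ (α - β)) := by
  set p := x ^ (-α - 1)
  set t := x ^ (α - β)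
  have hp : 0 < p := rpow_pos_of_pos hx _
  have ht : 0 < t := rpow_pos_of_pos hx _
  have hxα : x ^ (-α) = x * p := by
    rw [← rpow_one_add' hx.le (by linarith)]; ring_nf
  have hxβ : x ^ (-β) = x * p * t := by
    rw [← rpow_one_add' hx.le (by linarith), ← rpow_add hx]; ring_nf
  have hxβ1 : x ^ (-β - 1) = p * t := by
    rw [← rpow_add hx]; ring_nf
  have hden : α * c₁ + β * c₂ * t ≠ 0 := by positivity
  rw [hxα, hxβ, hxβ1, shiftFactor]
  field_simp

lemma increment_ratio_eq {x g a b α β : ℝ} (hx : 0 < x) (hg : 0 < g) :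
    (a * (x * g) ^ (1 - α) + b * (x * g) ^ (1 - β) - (a * x ^ (1 - α) + b * x ^ (1 - β))) /
        (x ^ (1 - α) + x ^ (1 - β)) =
      (a * (g ^ (1 - α) - 1) + b * x ^ (α - β) * (g ^ (1 - β) - 1)) / (1 + x ^ (α - β)) := by
  have hxβ : x ^ (1 - β) = x ^ (1 - α) * x ^ (α - β) := by
    rw [← rpow_add hx]; ring_nf
  have hxα : 0 < x ^ (1 - α) := rpow_pos_of_pos hx _
  rw [mul_rpow hx.le hg.le, mul_rpow hx.le hg.le, hxβ,
    div_eq_div_iff (by positivity) (by positivity)]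
  ring

lemma tendsto_increment_ratio {ι : Type*} {l : Filter ι} {g t : ι → ℝ} {A : ℝ}
    (hg : Tendsto g l (𝓝 A)) (hA : A ≠ 0) (ht : Tendsto t l (𝓝 0)) (a b p q : ℝ) :
    Tendsto (fun i => (a * (g i ^ p - 1) + b * t i * (g i ^ q - 1)) / (1 + t i)) l
      (𝓝 (a * (A ^ p - 1))) := by
  have := ((((hg.rpow_const (p := p) (.inl hA)).sub_const 1).const_mul a).add
    ((ht.const_mul b).mul ((hg.rpow_const (p := q) (.inl hA)).sub_const 1))).div
    (ht.const_add 1) (by norm_num)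
  simpa [Pi.div_def] using this

theorem utility_increment_over_f_tendsto_general
    (c₁ c₂ α β L γ : ℝ) (hc₁ : 0 < c₁) (hc₂ : 0 ≤ c₂)
    (hα : 0 < α) (hαβ : α < β)
    (A : ℝ) (hA : A = 1 + L * γ / α) (hApos : 0 < A)
    (U : ℝ → ℝ)
    (hU : ∀ x : ℝ, U x = c₁ / (1 - α) * x ^ (1 - α) + c₂ / (1 - β) * x ^ (1 - β))
    (chiHat : ℝ → ℝ)
    (hchi : ∀ x : ℝ, chiHat x = x + L * γ *
      ((c₁ * x ^ (-α) + c₂ * x ^ (-β)) /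
        (c₁ * α * x ^ (-α - 1) + c₂ * β * x ^ (-β - 1)))) :
    Tendsto (fun x : ℝ => (U (chiHat x) - U x) / (x ^ (1 - α) + x ^ (1 - β)))
      atTop (nhds (c₁ / (1 - α) * (A ^ (1 - α) - 1))) := by
  have ht : Tendsto (fun x : ℝ => x ^ (α - β)) atTop (𝓝 0) := by
    simpa using tendsto_rpow_neg_atTop (sub_pos.2 hαβ)
  have hg : Tendsto (fun x : ℝ => shiftFactor c₁ c₂ α β (L * γ) (x ^ (α - β))) atTop (𝓝 A) := by
    have := (continuousAt_shiftFactor_zero hc₁.ne' hα.ne' c₂ β (L * γ)).tendsto.comp ht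
    rwa [shiftFactor_zero hc₁.ne', ← hA] at this
  refine (tendsto_increment_ratio hg hApos.ne' ht
    (c₁ / (1 - α)) (c₂ / (1 - β)) (1 - α) (1 - β)).congr' ?_
  filter_upwards [eventually_gt_atTop 0, hg.eventually (eventually_gt_nhds hApos)] with x hx hgx
  rw [hU, hU, hchi, add_drift_eq_mul_shiftFactor hx hc₁ hc₂ hα (hα.trans hαβ),
    increment_ratio_eq hx hgx]

/-- With `A = 1 + Lγ/α > 0`,
`(U(χ̂(x)) - U(x)) / f(x) → (c₁/(1-α))(A^(1-α) - 1)` as `x → ∞`. -/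
theorem utility_increment_over_f_tendsto
    (c₁ c₂ α β L γ : ℝ) (hc₁ : 0 < c₁) (hc₂ : 0 ≤ c₂)
    (hα : 0 < α) (hαβ : α < β) (hα1 : α ≠ 1) (hβ1 : β ≠ 1) (hγ : 0 < γ)
    (A : ℝ) (hA : A = 1 + L * γ / α) (hApos : 0 < A)
    (U : ℝ → ℝ)
    (hU : ∀ x : ℝ, U x = c₁ / (1 - α) * x ^ (1 - α) + c₂ / (1 - β) * x ^ (1 - β))
    (chiHat : ℝ → ℝ)
    (hchi : ∀ x : ℝ, chiHat x = x + L * γ *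
      ((c₁ * x ^ (-α) + c₂ * x ^ (-β)) /
        (c₁ * α * x ^ (-α - 1) + c₂ * β * x ^ (-β - 1)))) :
    Tendsto (fun x : ℝ => (U (chiHat x) - U x) / (x ^ (1 - α) + x ^ (1 - β)))
      atTop (nhds (c₁ / (1 - α) * (A ^ (1 - α) - 1))) :=
  utility_increment_over_f_tendsto_general c₁ c₂ α β L γ hc₁ hc₂ hα hαβ A hA hApos U hU chiHat hchi
end

section
/- With the mixture-of-power utility $U$, one has $\lim_{x\to\infty} \frac{1}{U''(x)}\left[2U''(x) - 2\frac{U'(x)U'''(x)}{U''(x)} + 2\frac{[U'(x)]^2[U'''(x)]^2}{[U''(x)]^3} - \frac{[U'(x)]^2 U''''(x)}{[U''(x)]^2}\right] = \frac{\alpha-1}{\alpha}$; that is, $\big([U']^2/U''\big)''(x)$ is of order $U''(x)$ as $x \to \infty$, with limiting ratio $(\alpha-1)/\alpha \neq 0$. -/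
open Filter

set_option maxHeartbeats 1000000 in
theorem aux_alg_sq_quot (A B C D u x : ℝ) (hu : u ≠ 0) (hx : x ≠ 0) (hB : B ≠ 0) :
    (1 / (-(B * u))) *
      (2 * (-(B * u))
        - 2 * (A * (u * x) * (C * (u * x⁻¹)) / (-(B * u)))
        + 2 * ((A * (u * x)) ^ 2 * (C * (u * x⁻¹)) ^ 2 / (-(B * u)) ^ 3)
        - (A * (u * x)) ^ 2 * (-(D * (u * x⁻¹ * x⁻¹))) / (-(B * u)) ^ 2)
    = 2 - 2 * (A * C) / B ^ 2 + 2 * (A ^ 2 * C ^ 2) / B ^ 4 - A ^ 2 * D / B ^ 3 := by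
  have e1 : A * (u * x) * (C * (u * x⁻¹)) / (-(B * u)) = -(A * C * u / B) := by
    rw [div_neg, neg_inj]
    rw [div_eq_div_iff (mul_ne_zero hB hu) hB]
    field_simp
  have e2 : (A * (u * x)) ^ 2 * (C * (u * x⁻¹)) ^ 2 / (-(B * u)) ^ 3
      = -(A ^ 2 * C ^ 2 * u / B ^ 3) := by
    rw [div_eq_iff (pow_ne_zero _ (neg_ne_zero.mpr (mul_ne_zero hB hu))), neg_mul]
    field_simp
  have e3 : (A * (u * x)) ^ 2 * (-(D * (u * x⁻¹ * x⁻¹))) / (-(B * u)) ^ 2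
      = -(A ^ 2 * D * u ^ 3 / (B ^ 2 * u ^ 2)) := by
    rw [div_eq_iff (pow_ne_zero _ (neg_ne_zero.mpr (mul_ne_zero hB hu))), neg_mul]
    field_simp
  rw [e1, e2, e3]
  field_simp
  ring

set_option maxHeartbeats 2000000 in
/-- `([U']²/U'')''(x)` is of order `U''(x)` as `x → ∞`, with
limiting ratio `(α-1)/α`. -/
theorem sq_quotient_second_derivative_over_Udoubleprime_tendsto
    (c₁ c₂ α β : ℝ) (hc₁ : 0 < c₁) (hc₂ : 0 ≤ c₂)
    (hα : 0 < α) (hαβ : α < β) (hα1 : α ≠ 1) (hβ1 : β ≠ 1)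
    (U' U'' U''' U'''' : ℝ → ℝ)
    (hU' : ∀ x : ℝ, U' x = c₁ * x ^ (-α) + c₂ * x ^ (-β))
    (hU'' : ∀ x : ℝ, U'' x = -(c₁ * α * x ^ (-α - 1)) - c₂ * β * x ^ (-β - 1))
    (hU''' : ∀ x : ℝ, U''' x
      = c₁ * α * (α + 1) * x ^ (-α - 2) + c₂ * β * (β + 1) * x ^ (-β - 2))
    (hU'''' : ∀ x : ℝ, U'''' x
      = -(c₁ * α * (α + 1) * (α + 2) * x ^ (-α - 3))
        - c₂ * β * (β + 1) * (β + 2) * x ^ (-β - 3)) :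
    Tendsto (fun x : ℝ =>
        (1 / U'' x) *
          (2 * U'' x - 2 * (U' x * U''' x / U'' x)
            + 2 * ((U' x) ^ 2 * (U''' x) ^ 2 / (U'' x) ^ 3)
            - (U' x) ^ 2 * U'''' x / (U'' x) ^ 2))
      atTop (nhds ((α - 1) / α)) := by
  have hα0 : α ≠ 0 := ne_of_gt hα
  set F : ℝ → ℝ := fun s =>
    2 - 2 * ((c₁ + c₂ * s) * (c₁ * α * (α + 1) + c₂ * β * (β + 1) * s))
        / (c₁ * α + c₂ * β * s) ^ 2
      + 2 * ((c₁ + c₂ * s) ^ 2 * (c₁ * α * (α + 1) + c₂ * β * (β + 1) * s) ^ 2)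
        / (c₁ * α + c₂ * β * s) ^ 4
      - (c₁ + c₂ * s) ^ 2 * (c₁ * α * (α + 1) * (α + 2) + c₂ * β * (β + 1) * (β + 2) * s)
        / (c₁ * α + c₂ * β * s) ^ 3 with hFdef
  have hFcont : ContinuousAt F 0 := by
    rw [hFdef]
    fun_prop (disch := simp only [mul_zero, add_zero]; positivity)
  have hF0 : F 0 = (α - 1) / α := by
    simp only [hFdef]
    field_simp
    ring
  have hs : Tendsto (fun x : ℝ => x ^ (α - β)) atTop (nhds 0) := by
    have h := tendsto_rpow_neg_atTop (show (0:ℝ) < β - α by linarith)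
    simpa [neg_sub] using h
  have hcomp : Tendsto (fun x : ℝ => F (x ^ (α - β))) atTop (nhds ((α - 1) / α)) := by
    rw [← hF0]
    exact hFcont.tendsto.comp hs
  refine Tendsto.congr' ?_ hcomp
  filter_upwards [eventually_gt_atTop (0 : ℝ)] with x hx0
  simp only [hU', hU'', hU''', hU'''']
  have hs0 : (0 : ℝ) < x ^ (α - β) := Real.rpow_pos_of_pos hx0 _
  have h4 : x ^ (-β) = x ^ (-α) * x ^ (α - β) := by
    rw [← Real.rpow_add hx0]; congr 1; ring
  have h5 : x ^ (-β - 1) = x ^ (-α - 1) * x ^ (α - β) := by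
    rw [← Real.rpow_add hx0]; congr 1; ring
  have h6 : x ^ (-β - 2) = x ^ (-α - 2) * x ^ (α - β) := by
    rw [← Real.rpow_add hx0]; congr 1; ring
  have h7 : x ^ (-β - 3) = x ^ (-α - 3) * x ^ (α - β) := by
    rw [← Real.rpow_add hx0]; congr 1; ring
  have h3 : x ^ (-α - 3) = x ^ (-α - 2) * x⁻¹ := by
    have h := (Real.rpow_add hx0 (-α - 2) (-1)).symm
    rw [Real.rpow_neg_one] at h
    rw [h]; congr 1; ring
  rw [h4, h5, h6, h7, h3]
  have h2 : x ^ (-α - 2) = x ^ (-α - 1) * x⁻¹ := by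
    have h := (Real.rpow_add hx0 (-α - 1) (-1)).symm
    rw [Real.rpow_neg_one] at h
    rw [h]; congr 1; ring
  rw [h2]
  have h1 : x ^ (-α) = x ^ (-α - 1) * x := by
    have h := (Real.rpow_add hx0 (-α - 1) 1).symm
    rw [Real.rpow_one] at h
    rw [h]; congr 1; ring
  rw [h1]
  set s := x ^ (α - β) with hsd
  set u := x ^ (-α - 1) with hud
  have hu0 : (0 : ℝ) < u := Real.rpow_pos_of_pos hx0 _
  have hβ0 : (0 : ℝ) < β := lt_trans hα hαβ
  have hB0 : (0 : ℝ) < c₁ * α + c₂ * β * s := by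
    have h1' : (0 : ℝ) < c₁ * α := mul_pos hc₁ hα
    have h2' : (0 : ℝ) ≤ c₂ * β * s := mul_nonneg (mul_nonneg hc₂ hβ0.le) hs0.le
    linarith
  have hw : -(c₁ * α * u) - c₂ * β * (u * s) = -((c₁ * α + c₂ * β * s) * u) := by ring
  have hA : c₁ * (u * x) + c₂ * (u * x * s) = (c₁ + c₂ * s) * (u * x) := by ring
  have hC : c₁ * α * (α + 1) * (u * x⁻¹) + c₂ * β * (β + 1) * (u * x⁻¹ * s)
      = (c₁ * α * (α + 1) + c₂ * β * (β + 1) * s) * (u * x⁻¹) := by ring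
  have hD : -(c₁ * α * (α + 1) * (α + 2) * (u * x⁻¹ * x⁻¹))
        - c₂ * β * (β + 1) * (β + 2) * (u * x⁻¹ * x⁻¹ * s)
      = -((c₁ * α * (α + 1) * (α + 2) + c₂ * β * (β + 1) * (β + 2) * s)
          * (u * x⁻¹ * x⁻¹)) := by ring
  rw [hw, hA, hC, hD]
  simp only [hFdef]
  exact (aux_alg_sq_quot (c₁ + c₂ * s)
    (c₁ * α + c₂ * β * s)
    (c₁ * α * (α + 1) + c₂ * β * (β + 1) * s)
    (c₁ * α * (α + 1) * (α + 2) + c₂ * β * (β + 1) * (β + 2) * s)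
    u x hu0.ne' hx0.ne' hB0.ne').symm
end
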